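/- arXiv:2509.22036 — 2 statements merged into one kernel-verified Lean document; each statement's English description precedes it below -/
import Mathlib

section
/- Let μ be a finite Borel measure on ℝ, λ > 0, t > 0 and x ∈ ℝ. Then lim_{h→0} ∫_ℝ [∫_ℝ p_t(z − y) · |(G_λ(y − x − h) − G_λ(y − x))/h − g_λ(x − y)| dy] μ(dz) = 0, where the limit is over h → 0 with h ≠ 0. -/
open MeasureTheory Filter Set

/-- The one-dimensional Gaussian heat kernel `p_s(x) = (2πs)^{-1/2} · exp(−x²/(2s))`. -/
noncomputable def heatKernel (s : ℝ) (x : ℝ) : ℝ :=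
  (2 * Real.pi * s) ^ (-(1/2 : ℝ)) * Real.exp (-x ^ 2 / (2 * s))

/-- `G_λ(x) = (2λ)^{-1/2} · exp(-√(2λ)·|x|)`. -/
noncomputable def Gl (l : ℝ) (x : ℝ) : ℝ :=
  (2 * l) ^ (-(1/2 : ℝ)) * Real.exp (-Real.sqrt (2 * l) * |x|)

/-- `g_λ(x) = -sgn(x) · exp(-√(2λ)·|x|)`. -/
noncomputable def gl (l : ℝ) (x : ℝ) : ℝ :=
  -Real.sign x * Real.exp (-Real.sqrt (2 * l) * |x|)

/-!
The heat kernel is bounded by `(2πt)^{-1/2}` and `μ` is finite, so it suffices that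
`∫ |(G_λ(u - h) - G_λ(u))/h + g_λ(u)| du → 0` (substitute `u = y - x`; `g_λ` is odd).
This is dominated convergence: `g_λ = G_λ'` off `0`, and for `|h| ≤ 1` the difference quotients
are bounded by `e^{√(2λ)} e^{-√(2λ)|u|}`.
-/

open Real Topology

theorem Real.sign_eq_sign (r : ℝ) : Real.sign r = SignType.sign r := by
  rcases lt_trichotomy r 0 with hr | rfl | hr
  · simp [Real.sign_of_neg hr, hr]
  · simp
  · simp [Real.sign_of_pos hr, hr]

theorem Real.measurable_sign : Measurable Real.sign :=
  Measurable.ite (measurableSet_lt measurable_id measurable_const) measurable_const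
    (Measurable.ite (measurableSet_lt measurable_const measurable_id) measurable_const
      measurable_const)

theorem Real.abs_exp_neg_sub_exp_neg_le (p q : ℝ) :
    |exp (-p) - exp (-q)| ≤ exp (-min p q) * |p - q| := by
  wlog hpq : p ≤ q generalizing p q
  · rw [abs_sub_comm, min_comm, abs_sub_comm p q]
    exact this q p (le_of_not_ge hpq)
  have hexp : exp (-q) ≤ exp (-p) := exp_le_exp.mpr (by linarith)
  rw [min_eq_left hpq, abs_of_nonneg (by linarith), abs_of_nonpos (by linarith)]
  have hmul : exp (-p) * exp (p - q) = exp (-q) := by rw [← exp_add]; ring_nf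
  nlinarith [add_one_le_exp (p - q), exp_pos (-p)]

theorem integrable_exp_neg_mul_abs {a : ℝ} (ha : 0 < a) :
    Integrable fun u : ℝ => exp (-a * |u|) := by
  have hradial := (integrable_fun_norm_addHaar (volume : Measure ℝ) (f := fun r => exp (-a * r))).2
  simpa using hradial (by simpa using exp_neg_integrableOn_Ioi 0 ha)

theorem HasDerivAt.tendsto_slope_sub_add {G : ℝ → ℝ} {g u : ℝ} (hG : HasDerivAt G g u) :
    Tendsto (fun h => (G (u - h) - G u) / h + g) (𝓝[≠] 0) (𝓝 0) := by
  have hneg : Tendsto (fun h : ℝ => -h) (𝓝[≠] 0) (𝓝[≠] 0) :=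
    tendsto_nhdsWithin_iff.2 ⟨(continuous_neg.tendsto' _ _ neg_zero).mono_left nhdsWithin_le_nhds,
      eventually_mem_nhdsWithin.mono fun _ hh => neg_ne_zero.2 hh⟩
  have hslope := (hG.tendsto_slope_zero.comp hneg).neg.add_const g
  rw [neg_add_cancel] at hslope
  refine hslope.congr fun h => ?_
  simp only [Function.comp_apply, smul_eq_mul, inv_neg, ← sub_eq_add_neg, div_eq_inv_mul]
  ring

section SlopeL1

variable {G g B : ℝ → ℝ}

theorem abs_slope_add_le {h : ℝ} (hh : h ≠ 0) (hbound : ∀ u, |G (u - h) - G u| ≤ B u * |h|)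
    (u : ℝ) : |(G (u - h) - G u) / h + g u| ≤ B u + |g u| := by
  have hslope : |(G (u - h) - G u) / h| ≤ B u := by
    rw [abs_div, div_le_iff₀ (abs_pos.2 hh)]
    exact hbound u
  exact (abs_add_le _ _).trans (add_le_add_left hslope _)

theorem eventually_integrable_abs_slope_add (hG : Continuous G) (hg : Integrable g)
    (hB : Integrable B) (hbound : ∀ᶠ h in 𝓝 0, ∀ u, |G (u - h) - G u| ≤ B u * |h|) :
    ∀ᶠ h in 𝓝[≠] 0, Integrable fun u => |(G (u - h) - G u) / h + g u| := by
  filter_upwards [nhdsWithin_le_nhds hbound, self_mem_nhdsWithin] with h hbound_h hh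
  have hmeas : AEStronglyMeasurable (fun u => |(G (u - h) - G u) / h + g u|) :=
    ((((hG.comp (continuous_sub_right h)).sub hG).div_const h).aestronglyMeasurable.add
      hg.aestronglyMeasurable).norm
  refine (hB.add hg.abs).mono' hmeas (ae_of_all _ fun u => ?_)
  rw [norm_abs_eq_norm, Real.norm_eq_abs]
  exact abs_slope_add_le hh hbound_h u

theorem tendsto_integral_abs_slope_add (hG : Continuous G) (hg : Integrable g)
    (hB : Integrable B) (hbound : ∀ᶠ h in 𝓝 0, ∀ u, |G (u - h) - G u| ≤ B u * |h|)
    (hderiv : ∀ᵐ u, HasDerivAt G (g u) u) :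
    Tendsto (fun h => ∫ u, |(G (u - h) - G u) / h + g u|) (𝓝[≠] 0) (𝓝 0) := by
  have hdom : ∀ᶠ h in 𝓝[≠] 0, ∀ᵐ u, ‖|(G (u - h) - G u) / h + g u|‖ ≤ B u + |g u| := by
    filter_upwards [nhdsWithin_le_nhds hbound, self_mem_nhdsWithin] with h hbound_h hh
    exact ae_of_all _ fun u => by
      rw [norm_abs_eq_norm, Real.norm_eq_abs]; exact abs_slope_add_le hh hbound_h u
  simpa using tendsto_integral_filter_of_dominated_convergence _
    ((eventually_integrable_abs_slope_add hG hg hB hbound).mono fun _ hi => hi.aestronglyMeasurable)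
    hdom (hB.add hg.abs) (hderiv.mono fun _ hu => hu.tendsto_slope_sub_add.abs)

end SlopeL1

theorem tendsto_integral_integral_mul_of_le {α β ι : Type*} [MeasurableSpace α]
    [MeasurableSpace β] {μ : Measure α} [IsFiniteMeasure μ] {ν : Measure β} {K : α → β → ℝ}
    {F : ι → β → ℝ} {L : Filter ι} {C : ℝ} (hK0 : ∀ z y, 0 ≤ K z y) (hKC : ∀ z y, K z y ≤ C)
    (hF0 : ∀ i y, 0 ≤ F i y) (hFint : ∀ᶠ i in L, Integrable (F i) ν)
    (hF : Tendsto (fun i => ∫ y, F i y ∂ν) L (𝓝 0)) :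
    Tendsto (fun i => ∫ z, ∫ y, K z y * F i y ∂ν ∂μ) L (𝓝 0) := by
  have hinner_nonneg : ∀ i z, 0 ≤ ∫ y, K z y * F i y ∂ν := fun i z =>
    integral_nonneg fun y => mul_nonneg (hK0 z y) (hF0 i y)
  have hle : ∀ᶠ i in L, ∫ z, ∫ y, K z y * F i y ∂ν ∂μ ≤ μ.real univ * (C * ∫ y, F i y ∂ν) := by
    filter_upwards [hFint] with i hi
    have hinner : ∀ z, ∫ y, K z y * F i y ∂ν ≤ C * ∫ y, F i y ∂ν := fun z => by
      rw [← integral_const_mul]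
      exact integral_mono_of_nonneg (ae_of_all _ fun y => mul_nonneg (hK0 z y) (hF0 i y))
        (hi.const_mul C) (ae_of_all _ fun y => mul_le_mul_of_nonneg_right (hKC z y) (hF0 i y))
    calc ∫ z, ∫ y, K z y * F i y ∂ν ∂μ ≤ ∫ _, C * ∫ y, F i y ∂ν ∂μ :=
          integral_mono_of_nonneg (ae_of_all _ (hinner_nonneg i)) (integrable_const _)
            (ae_of_all _ hinner)
      _ = μ.real univ * (C * ∫ y, F i y ∂ν) := by rw [integral_const, smul_eq_mul]
  exact squeeze_zero' (Eventually.of_forall fun i => integral_nonneg (hinner_nonneg i)) hle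
    (by simpa using (hF.const_mul C).const_mul (μ.real univ))

theorem heatKernel_nonneg {t : ℝ} (ht : 0 ≤ t) (w : ℝ) : 0 ≤ heatKernel t w :=
  mul_nonneg (rpow_nonneg (by positivity) _) (exp_pos _).le

theorem heatKernel_le {t : ℝ} (ht : 0 ≤ t) (w : ℝ) :
    heatKernel t w ≤ (2 * π * t) ^ (-(1/2 : ℝ)) :=
  mul_le_of_le_one_right (rpow_nonneg (by positivity) _) <| exp_le_one_iff.2 <|
    div_nonpos_of_nonpos_of_nonneg (neg_nonpos.2 (sq_nonneg w)) (by positivity)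

section Resolvent

variable {l : ℝ}

theorem sqrt_mul_rpow_neg_half {c : ℝ} (hc : 0 < c) : √c * c ^ (-(1/2 : ℝ)) = 1 := by
  rw [sqrt_eq_rpow, ← rpow_add hc]
  norm_num

theorem continuous_Gl : Continuous (Gl l) := by
  unfold Gl
  fun_prop

theorem measurable_gl : Measurable (gl l) :=
  Real.measurable_sign.neg.mul (measurable_exp.comp (measurable_const.mul measurable_abs))

theorem gl_neg (v : ℝ) : gl l (-v) = -gl l v := by
  simp only [gl, Real.sign_neg, abs_neg]
  ring

theorem abs_gl_le (v : ℝ) : |gl l v| ≤ exp (-√(2 * l) * |v|) := by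
  rw [gl, abs_mul, abs_neg, abs_exp]
  refine mul_le_of_le_one_left (exp_pos _).le ?_
  rcases Real.sign_apply_eq v with h | h | h <;> simp [h]

theorem hasDerivAt_Gl (hl : 0 < l) {u : ℝ} (hu : u ≠ 0) : HasDerivAt (Gl l) (gl l u) u := by
  have hderiv :=
    (((hasDerivAt_abs hu).const_mul (-√(2 * l))).exp).const_mul ((2 * l) ^ (-(1/2 : ℝ)))
  refine hderiv.congr_deriv ?_
  rw [gl, Real.sign_eq_sign]
  linear_combination (-(SignType.sign u : ℝ) * exp (-√(2 * l) * |u|)) *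
    sqrt_mul_rpow_neg_half (by positivity : 0 < 2 * l)

/-- The factor `e^{√(2λ)|h|}` accounts for the shift of the peak of `G_λ` by `h`. -/
theorem abs_Gl_sub_Gl_le (hl : 0 < l) (u h : ℝ) :
    |Gl l (u - h) - Gl l u| ≤ exp (√(2 * l) * |h|) * exp (-√(2 * l) * |u|) * |h| := by
  set a := √(2 * l)
  set c := (2 * l) ^ (-(1/2 : ℝ))
  have ha : 0 < a := sqrt_pos.2 (by positivity)
  have hc : 0 < c := rpow_pos_of_pos (by positivity) _
  have hdiff : abs (a * |u - h| - a * |u|) ≤ a * |h| := by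
    rw [← mul_sub, abs_mul, abs_of_pos ha]
    exact mul_le_mul_of_nonneg_left (by simpa using abs_abs_sub_abs_le_abs_sub (u - h) u) ha.le
  have hmin : -min (a * |u - h|) (a * |u|) ≤ a * |h| + -a * |u| := by
    have htri := abs_sub_abs_le_abs_sub u h
    rw [neg_le, le_min_iff]
    constructor <;> nlinarith [abs_nonneg h]
  calc |Gl l (u - h) - Gl l u| = c * |exp (-(a * |u - h|)) - exp (-(a * |u|))| := by
        rw [Gl, Gl, ← mul_sub, abs_mul, abs_of_pos hc, neg_mul, neg_mul]
    _ ≤ c * (exp (-min (a * |u - h|) (a * |u|)) * (a * |h|)) := by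
        gcongr
        exact (abs_exp_neg_sub_exp_neg_le _ _).trans (by gcongr)
    _ ≤ c * (exp (a * |h| + -a * |u|) * (a * |h|)) := by gcongr
    _ = exp (a * |h|) * exp (-a * |u|) * |h| * (a * c) := by rw [exp_add]; ring
    _ = exp (a * |h|) * exp (-a * |u|) * |h| := by
        rw [sqrt_mul_rpow_neg_half (by positivity : 0 < 2 * l), mul_one]

end Resolvent

/-- Let `μ` be a finite Borel measure on `ℝ`, `λ > 0`, `t > 0`, `x ∈ ℝ`. Then
`lim_{h→0} ∫_ℝ [∫_ℝ p_t(z − y)·|(G_λ(y − x − h) − G_λ(y − x))/h − g_λ(x − y)| dy] μ(dz) = 0`,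
the limit being over `h → 0`, `h ≠ 0`. -/
theorem expected_difference_quotient_X_tendsto_zero (μ : Measure ℝ) [IsFiniteMeasure μ]
    (l : ℝ) (hl : 0 < l) (t : ℝ) (ht : 0 < t) (x : ℝ) :
    Tendsto
      (fun h : ℝ => ∫ z,
        (∫ y, heatKernel t (z - y) *
          |(Gl l (y - x - h) - Gl l (y - x)) / h - gl l (x - y)|) ∂μ)
      (nhdsWithin 0 {(0 : ℝ)}ᶜ) (nhds 0) := by
  set a := √(2 * l)
  have ha : 0 < a := sqrt_pos.2 (by positivity)
  have hbound : ∀ᶠ h in 𝓝 0, ∀ u, |Gl l (u - h) - Gl l u| ≤ exp a * exp (-a * |u|) * |h| := by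
    filter_upwards [Metric.closedBall_mem_nhds (0 : ℝ) one_pos] with h hh u
    refine (abs_Gl_sub_Gl_le hl u h).trans ?_
    gcongr
    exact mul_le_of_le_one_right ha.le (by simpa using hh)
  have hB := (integrable_exp_neg_mul_abs ha).const_mul (exp a)
  have hg : Integrable (gl l) := (integrable_exp_neg_mul_abs ha).mono'
    measurable_gl.aestronglyMeasurable (ae_of_all _ fun v => abs_gl_le v)
  have hderiv : ∀ᵐ u, HasDerivAt (Gl l) (gl l u) u := by
    filter_upwards [volume.ae_ne 0] with u hu using hasDerivAt_Gl hl hu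
  have htranslate : ∀ h : ℝ, (fun y => |(Gl l (y - x - h) - Gl l (y - x)) / h - gl l (x - y)|)
      = fun y => |(Gl l (y - x - h) - Gl l (y - x)) / h + gl l (y - x)| := fun h => by
    funext y
    rw [← neg_sub y x, gl_neg, sub_neg_eq_add]
  refine tendsto_integral_integral_mul_of_le (fun z y => heatKernel_nonneg ht.le (z - y))
    (fun z y => heatKernel_le ht.le (z - y)) (fun _ _ => abs_nonneg _) ?_ ?_
  · filter_upwards [eventually_integrable_abs_slope_add continuous_Gl hg hB hbound] with h hh
    rw [htranslate]
    exact hh.comp_sub_right x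
  · refine (tendsto_integral_abs_slope_add continuous_Gl hg hB hbound hderiv).congr fun h => ?_
    rw [htranslate]
    exact (integral_sub_right_eq_self (fun u => |(Gl l (u - h) - Gl l u) / h + gl l u|) x).symm
end

section
/- Let μ be a finite Borel measure on ℝ, λ > 0, T > 0, x ∈ ℝ and p ≥ 1. Then lim_{h→0} ∫_0^T ∫_ℝ |(G_λ(y − x − h) − G_λ(y − x))/h − g_λ(x − y)|^p · (∫_ℝ p_s(y − z) μ(dz)) dy ds = 0, where the limit is over h → 0 with h ≠ 0. -/
open MeasureTheory Filter Set

/-!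
Write `c = √(2λ)` and `u = y - x`; the integrand compares the difference quotient
`(G_λ(u - h) - G_λ(u)) / h` with `-G_λ'(u) = g_λ(-u)`. Since `G_λ` is `1`-Lipschitz and
`|g_λ| ≤ 1`, the error is at most `2` everywhere; for `|u| > |h|` the segment from `u - h` to `u`
avoids the kink of `G_λ` at `0`, and `|eᵗ - 1 - t| ≤ t²` bounds the error by `c|h|`. The weight
`y ↦ ∫ p_s(y - z) μ(dz)` has mass `μ(ℝ)` and is bounded by `p_s(0) μ(ℝ)`, while
`s ↦ p_s(0) = (2πs)^{-1/2}` is integrable on `(0, T]`. So the double integral is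
`O((c|h|)^p + |h|)`.
-/

open ProbabilityTheory Real

lemma Real.abs_sign_le_one (u : ℝ) : |sign u| ≤ 1 := by
  rcases sign_apply_eq u with h | h | h <;> simp [h]

lemma abs_exp_neg_sub_exp_neg_le {a b : ℝ} (ha : 0 ≤ a) (hb : 0 ≤ b) :
    |exp (-a) - exp (-b)| ≤ |a - b| := by
  have hderiv (t : ℝ) : HasDerivWithinAt (fun t => exp (-t)) (exp (-t) * -1) (Ici 0) t :=
    (hasDerivAt_neg t).exp.hasDerivWithinAt
  have hbound (t : ℝ) (ht : t ∈ Ici (0 : ℝ)) : ‖exp (-t) * -1‖ ≤ 1 := by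
    simpa using exp_le_one_iff.mpr (neg_nonpos.mpr ht)
  simpa [abs_sub_comm] using
    (convex_Ici 0).norm_image_sub_le_of_norm_hasDerivWithin_le (fun t _ => hderiv t) hbound hb ha

lemma abs_sub_eq_abs_sub_sign_mul {u h : ℝ} (hu : |h| < |u|) : |u - h| = |u| - sign u * h := by
  rcases lt_trichotomy u 0 with hu0 | rfl | hu0
  · rw [abs_of_neg hu0] at hu ⊢
    rw [sign_of_neg hu0, abs_of_neg (by linarith [neg_abs_le h])]
    ring
  · simp at hu
    linarith [abs_nonneg h]
  · rw [abs_of_pos hu0] at hu ⊢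
    rw [sign_of_pos hu0, abs_of_pos (by linarith [le_abs_self h])]
    ring

lemma integral_rpow_abs_mul_le {f K : ℝ → ℝ} {x r ε M B p : ℝ} (hp : 0 ≤ p) (hr : 0 ≤ r)
    (hε : 0 ≤ ε) (hK0 : ∀ y, 0 ≤ K y) (hKB : ∀ y, K y ≤ B) (hK : Integrable K)
    (hfM : ∀ y, |f y| ≤ M) (hfε : ∀ y, r < |y - x| → |f y| ≤ ε) :
    ∫ y, |f y| ^ p * K y ≤ ε ^ p * (∫ y, K y) + M ^ p * (2 * r * B) := by
  have hM : 0 ≤ M := (abs_nonneg _).trans (hfM 0)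
  set ball := Metric.closedBall x r
  have hpt (y : ℝ) : |f y| ^ p * K y ≤ ε ^ p * K y + M ^ p * ball.indicator (fun _ => B) y := by
    by_cases hy : y ∈ ball
    · rw [indicator_of_mem hy]
      have := mul_le_mul (rpow_le_rpow (abs_nonneg _) (hfM y) hp) (hKB y) (hK0 y) (by positivity)
      nlinarith [mul_nonneg (rpow_nonneg hε p) (hK0 y)]
    · rw [indicator_of_notMem hy, mul_zero, add_zero]
      rw [Metric.mem_closedBall, Real.dist_eq, not_le] at hy
      exact mul_le_mul_of_nonneg_right (rpow_le_rpow (abs_nonneg _) (hfε y hy) hp) (hK0 y)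
  have hind : Integrable (ball.indicator fun _ => B) :=
    (integrable_indicator_iff measurableSet_closedBall).mpr
      (integrableOn_const measure_closedBall_lt_top.ne)
  calc ∫ y, |f y| ^ p * K y ≤ ∫ y, (ε ^ p * K y + M ^ p * ball.indicator (fun _ => B) y) :=
        integral_mono_of_nonneg
          (ae_of_all _ fun y => mul_nonneg (rpow_nonneg (abs_nonneg _) p) (hK0 y))
          ((hK.const_mul _).add (hind.const_mul _)) (ae_of_all _ hpt)
    _ = ε ^ p * (∫ y, K y) + M ^ p * (2 * r * B) := by
        rw [integral_add (hK.const_mul _) (hind.const_mul _), integral_const_mul,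
          integral_const_mul, integral_indicator_const _ measurableSet_closedBall,
          Real.volume_real_closedBall hr, smul_eq_mul]

lemma heatKernel_eq_gaussianPDFReal {s : ℝ} (hs : 0 ≤ s) :
    heatKernel s = gaussianPDFReal 0 s.toNNReal := by
  ext x
  rw [heatKernel, gaussianPDFReal, Real.coe_toNNReal _ hs, sub_zero, Real.rpow_neg (by positivity),
    Real.sqrt_eq_rpow, one_div]

lemma heatKernel_nonneg_s15 {s : ℝ} (hs : 0 ≤ s) (x : ℝ) : 0 ≤ heatKernel s x := by
  rw [heatKernel_eq_gaussianPDFReal hs]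
  exact gaussianPDFReal_nonneg _ _ _

lemma heatKernel_le_heatKernel_zero {s : ℝ} (hs : 0 ≤ s) (x : ℝ) :
    heatKernel s x ≤ heatKernel s 0 := by
  refine mul_le_mul_of_nonneg_left (exp_le_exp.mpr ?_) (by positivity)
  simpa [neg_div] using div_nonneg (sq_nonneg x) (by positivity : (0 : ℝ) ≤ 2 * s)

lemma integrableOn_heatKernel_zero (T : ℝ) :
    IntegrableOn (fun s => heatKernel s 0) (Ioc 0 T) := by
  have hpow : IntegrableOn (fun s : ℝ => (2 * π) ^ (-(1/2 : ℝ)) * s ^ (-(1/2 : ℝ))) (Ioc 0 T) :=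
    ((intervalIntegral.intervalIntegrable_rpow' (a := 0) (b := T) (by norm_num)).1).const_mul _
  refine hpow.congr_fun (fun s hs => ?_) measurableSet_Ioc
  simp [heatKernel, mul_rpow (by positivity : (0 : ℝ) ≤ 2 * π) hs.1.le]

lemma integrable_heatKernel_sub {s : ℝ} (hs : 0 ≤ s) (z : ℝ) :
    Integrable (fun y => heatKernel s (y - z)) := by
  simp_rw [heatKernel_eq_gaussianPDFReal hs, gaussianPDFReal_sub]
  exact integrable_gaussianPDFReal _ _

lemma integral_heatKernel_sub {s : ℝ} (hs : 0 < s) (z : ℝ) :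
    ∫ y, heatKernel s (y - z) = 1 := by
  simp_rw [heatKernel_eq_gaussianPDFReal hs.le, gaussianPDFReal_sub]
  exact integral_gaussianPDFReal_eq_one _ (by simpa using hs)

/-- The density of `μ ∗ 𝒩(0, s)`. -/
noncomputable def heatFlow (μ : Measure ℝ) (s y : ℝ) : ℝ :=
  ∫ z, heatKernel s (y - z) ∂μ

section HeatFlow

variable {μ : Measure ℝ} {s : ℝ}

lemma heatFlow_nonneg (hs : 0 ≤ s) (y : ℝ) : 0 ≤ heatFlow μ s y :=
  integral_nonneg fun _ => heatKernel_nonneg_s15 hs _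

lemma integral_rpow_abs_mul_heatFlow_nonneg (f : ℝ → ℝ) (p : ℝ) (hs : 0 ≤ s) :
    0 ≤ ∫ y, |f y| ^ p * heatFlow μ s y :=
  integral_nonneg fun y => mul_nonneg (rpow_nonneg (abs_nonneg _) _) (heatFlow_nonneg hs y)

variable [IsFiniteMeasure μ]

lemma heatFlow_le (hs : 0 ≤ s) (y : ℝ) : heatFlow μ s y ≤ heatKernel s 0 * μ.real univ := by
  have hmeas : AEStronglyMeasurable (fun z => heatKernel s (y - z)) μ := by
    rw [heatKernel_eq_gaussianPDFReal hs]
    exact ((measurable_gaussianPDFReal _ _).comp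
      (measurable_const.sub measurable_id)).aestronglyMeasurable
  have hint : Integrable (fun z => heatKernel s (y - z)) μ :=
    (integrable_const (heatKernel s 0)).mono' hmeas (ae_of_all _ fun z => by
      rw [Real.norm_of_nonneg (heatKernel_nonneg_s15 hs _)]
      exact heatKernel_le_heatKernel_zero hs _)
  calc heatFlow μ s y ≤ ∫ _, heatKernel s 0 ∂μ :=
        integral_mono hint (integrable_const _) fun z => heatKernel_le_heatKernel_zero hs _
    _ = heatKernel s 0 * μ.real univ := by rw [integral_const, smul_eq_mul, mul_comm]

lemma integrable_heatKernel_sub_prod (hs : 0 ≤ s) :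
    Integrable (fun q : ℝ × ℝ => heatKernel s (q.1 - q.2)) (volume.prod μ) := by
  have hmeas : AEStronglyMeasurable (fun q : ℝ × ℝ => heatKernel s (q.1 - q.2))
      (volume.prod μ) := by
    rw [heatKernel_eq_gaussianPDFReal hs]
    exact ((measurable_gaussianPDFReal _ _).comp
      (measurable_fst.sub measurable_snd)).aestronglyMeasurable
  rw [integrable_prod_iff' hmeas]
  refine ⟨ae_of_all _ (integrable_heatKernel_sub hs), ?_⟩
  simp_rw [Real.norm_of_nonneg (heatKernel_nonneg_s15 hs _),
    integral_sub_right_eq_self (fun y => heatKernel s y)]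
  exact integrable_const _

lemma integrable_heatFlow (hs : 0 ≤ s) : Integrable (heatFlow μ s) :=
  (integrable_heatKernel_sub_prod hs).integral_prod_left

lemma integral_heatFlow (hs : 0 < s) : ∫ y, heatFlow μ s y = μ.real univ := by
  unfold heatFlow
  rw [integral_integral_swap (integrable_heatKernel_sub_prod hs.le)]
  simp_rw [integral_heatKernel_sub hs]
  rw [integral_const, smul_eq_mul, mul_one]

end HeatFlow

section Resolvent

variable {l : ℝ}

lemma Gl_eq (hl : 0 < l) (u : ℝ) : Gl l u = (√(2 * l))⁻¹ * exp (-(√(2 * l) * |u|)) := by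
  rw [Gl, rpow_neg (by positivity), sqrt_eq_rpow, one_div, neg_mul]

lemma abs_Gl_sub_Gl_le_s15 (hl : 0 < l) (a b : ℝ) : |Gl l a - Gl l b| ≤ |a - b| := by
  have hc : 0 < √(2 * l) := sqrt_pos.mpr (by positivity)
  rw [Gl_eq hl, Gl_eq hl, ← mul_sub, abs_mul, abs_of_pos (inv_pos.mpr hc)]
  calc (√(2 * l))⁻¹ * |exp (-(√(2 * l) * |a|)) - exp (-(√(2 * l) * |b|))|
      ≤ (√(2 * l))⁻¹ * |(√(2 * l) * |a| - √(2 * l) * |b|)| := by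
        gcongr _ * ?_
        exact abs_exp_neg_sub_exp_neg_le (by positivity) (by positivity)
    _ = |(|a| - |b|)| := by rw [← mul_sub, abs_mul, abs_of_pos hc, inv_mul_cancel_left₀ hc.ne']
    _ ≤ |a - b| := abs_abs_sub_abs_le_abs_sub a b

lemma abs_gl_le_one (l u : ℝ) : |gl l u| ≤ 1 := by
  rw [gl, abs_mul, abs_neg, abs_of_pos (exp_pos _)]
  exact mul_le_one₀ (abs_sign_le_one u) (exp_pos _).le
    (exp_le_one_iff.mpr (mul_nonpos_of_nonpos_of_nonneg (by simp) (abs_nonneg u)))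

variable {h : ℝ}

lemma abs_Gl_slope_sub_gl_le_two (hl : 0 < l) (hh : h ≠ 0) (u : ℝ) :
    |(Gl l (u - h) - Gl l u) / h - gl l (-u)| ≤ 2 := by
  have hslope : |(Gl l (u - h) - Gl l u) / h| ≤ 1 := by
    rw [abs_div, div_le_one (abs_pos.mpr hh)]
    simpa using abs_Gl_sub_Gl_le_s15 hl (u - h) u
  linarith [abs_sub ((Gl l (u - h) - Gl l u) / h) (gl l (-u)), abs_gl_le_one l (-u)]

lemma abs_Gl_slope_sub_gl_le (hl : 0 < l) (hh : h ≠ 0) {u : ℝ} (hu : |h| < |u|)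
    (hch : √(2 * l) * |h| ≤ 1) :
    |(Gl l (u - h) - Gl l u) / h - gl l (-u)| ≤ √(2 * l) * |h| := by
  have hGl := Gl_eq hl
  set c := √(2 * l)
  have hc : 0 < c := sqrt_pos.mpr (by positivity)
  set t := c * sign u * h
  have hgl : gl l (-u) = sign u * exp (-(c * |u|)) := by
    rw [gl, sign_neg, abs_neg, neg_neg, neg_mul]
  have hG : Gl l (u - h) = c⁻¹ * exp (-(c * |u|)) * exp t := by
    rw [hGl, abs_sub_eq_abs_sub_sign_mul hu, mul_assoc, ← exp_add]
    congr 2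
    ring
  have hslope : (Gl l (u - h) - Gl l u) / h - gl l (-u)
      = c⁻¹ * exp (-(c * |u|)) * (exp t - 1 - t) / h := by
    rw [hG, hGl, hgl]
    field_simp
    ring
  have ht : |t| ≤ c * |h| := by
    rw [abs_mul, abs_mul, abs_of_pos hc]
    exact mul_le_mul_of_nonneg_right (mul_le_of_le_one_right hc.le (abs_sign_le_one u))
      (abs_nonneg h)
  have hexp : |exp t - 1 - t| ≤ (c * |h|) ^ 2 :=
    (abs_exp_sub_one_sub_id_le (ht.trans hch)).trans (by rw [← sq_abs t]; gcongr)
  rw [hslope, abs_div, abs_mul, abs_mul, abs_of_pos (inv_pos.mpr hc), abs_of_pos (exp_pos _)]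
  calc c⁻¹ * exp (-(c * |u|)) * |exp t - 1 - t| / |h|
      ≤ c⁻¹ * 1 * (c * |h|) ^ 2 / |h| := by
        gcongr
        exact exp_le_one_iff.mpr (neg_nonpos.mpr (by positivity))
    _ = c * |h| := by field_simp

end Resolvent

section SlopeError

variable {μ : Measure ℝ} [IsFiniteMeasure μ] {l h p : ℝ}

lemma integral_rpow_Gl_slope_error_mul_heatFlow_le (hl : 0 < l) (hh : h ≠ 0)
    (hch : √(2 * l) * |h| ≤ 1) (x : ℝ) (hp : 0 ≤ p) {s : ℝ} (hs : 0 < s) :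
    ∫ y, |(Gl l (y - x - h) - Gl l (y - x)) / h - gl l (x - y)| ^ p * heatFlow μ s y
      ≤ (√(2 * l) * |h|) ^ p * μ.real univ +
        2 ^ p * (2 * |h| * (heatKernel s 0 * μ.real univ)) := by
  have := integral_rpow_abs_mul_le
    (f := fun y => (Gl l (y - x - h) - Gl l (y - x)) / h - gl l (x - y)) (x := x)
    (ε := √(2 * l) * |h|) (M := 2) hp (abs_nonneg h) (by positivity)
    (heatFlow_nonneg hs.le) (heatFlow_le (μ := μ) hs.le) (integrable_heatFlow hs.le)
    (fun y => by rw [← neg_sub y x]; exact abs_Gl_slope_sub_gl_le_two hl hh (y - x))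
    (fun y hy => by rw [← neg_sub y x]; exact abs_Gl_slope_sub_gl_le hl hh hy hch)
  rwa [integral_heatFlow hs] at this

lemma setIntegral_rpow_Gl_slope_error_mul_heatFlow_le (hl : 0 < l) (hh : h ≠ 0)
    (hch : √(2 * l) * |h| ≤ 1) (x : ℝ) (hp : 0 ≤ p) (T : ℝ) :
    ∫ s in Ioc 0 T, ∫ y, |(Gl l (y - x - h) - Gl l (y - x)) / h - gl l (x - y)| ^ p *
        heatFlow μ s y
      ≤ (√(2 * l) * |h|) ^ p * (μ.real univ * volume.real (Ioc 0 T)) +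
        |h| * (2 ^ p * 2 * μ.real univ * ∫ s in Ioc 0 T, heatKernel s 0) := by
  have hconst : IntegrableOn (fun _ : ℝ => (√(2 * l) * |h|) ^ p * μ.real univ) (Ioc 0 T) :=
    integrableOn_const measure_Ioc_lt_top.ne
  have hkernel : IntegrableOn (fun s => 2 ^ p * (2 * |h| * (heatKernel s 0 * μ.real univ)))
      (Ioc 0 T) :=
    (((integrableOn_heatKernel_zero T).mul_const _).const_mul _).const_mul _
  calc _ ≤ ∫ s in Ioc 0 T, ((√(2 * l) * |h|) ^ p * μ.real univ +
          2 ^ p * (2 * |h| * (heatKernel s 0 * μ.real univ))) := by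
        refine integral_mono_of_nonneg ?_ (hconst.add hkernel) ?_
        · filter_upwards [ae_restrict_mem measurableSet_Ioc] with s hs
          exact integral_rpow_abs_mul_heatFlow_nonneg _ p hs.1.le
        · filter_upwards [ae_restrict_mem measurableSet_Ioc] with s hs
          exact integral_rpow_Gl_slope_error_mul_heatFlow_le hl hh hch x hp hs.1
    _ = _ := by
        rw [integral_add hconst hkernel, setIntegral_const, integral_const_mul,
          integral_const_mul, integral_mul_const, smul_eq_mul]
        ring

end SlopeError

theorem martingale_increment_moment_tendsto_zero_general (μ : Measure ℝ) [IsFiniteMeasure μ]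
    (l : ℝ) (hl : 0 < l) (T : ℝ) (x : ℝ) (p : ℝ) (hp : 1 ≤ p) :
    Tendsto
      (fun h : ℝ => ∫ s in Set.Ioc (0 : ℝ) T,
        ∫ y, |(Gl l (y - x - h) - Gl l (y - x)) / h - gl l (x - y)| ^ p *
          ∫ z, heatKernel s (y - z) ∂μ)
      (nhdsWithin 0 {(0 : ℝ)}ᶜ) (nhds 0) := by
  have hp0 : 0 < p := by linarith
  set A := μ.real univ * volume.real (Ioc 0 T)
  set B := 2 ^ p * 2 * μ.real univ * ∫ s in Ioc 0 T, heatKernel s 0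
  have habs := continuous_abs.tendsto (0 : ℝ)
  have hcabs : Tendsto (fun h : ℝ => √(2 * l) * |h|) (nhds 0) (nhds 0) := by
    simpa using habs.const_mul (√(2 * l))
  have hbound : ∀ᶠ h in nhdsWithin 0 {(0 : ℝ)}ᶜ, (∫ s in Ioc 0 T,
      ∫ y, |(Gl l (y - x - h) - Gl l (y - x)) / h - gl l (x - y)| ^ p * heatFlow μ s y)
        ≤ (√(2 * l) * |h|) ^ p * A + |h| * B := by
    filter_upwards [nhdsWithin_le_nhds (hcabs.eventually (ge_mem_nhds one_pos)),
      self_mem_nhdsWithin] with h hch hh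
    exact setIntegral_rpow_Gl_slope_error_mul_heatFlow_le hl hh hch x hp0.le T
  have hlim : Tendsto (fun h : ℝ => (√(2 * l) * |h|) ^ p * A + |h| * B) (nhds 0) (nhds 0) := by
    simpa [zero_rpow hp0.ne'] using
      ((hcabs.rpow_const (Or.inr hp0.le)).mul_const A).add (habs.mul_const B)
  refine squeeze_zero' (Eventually.of_forall fun h => ?_) hbound
    (hlim.mono_left nhdsWithin_le_nhds)
  exact setIntegral_nonneg measurableSet_Ioc fun s hs =>
    integral_rpow_abs_mul_heatFlow_nonneg _ p hs.1.le

/-- Let `μ` be a finite Borel measure on `ℝ`, `λ > 0`, `T > 0`, `x ∈ ℝ` and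
`p ≥ 1`. Then
`lim_{h→0} ∫_0^T ∫_ℝ |(G_λ(y−x−h) − G_λ(y−x))/h − g_λ(x−y)|^p · (∫_ℝ p_s(y−z) μ(dz)) dy ds = 0`,
the limit being over `h → 0`, `h ≠ 0`. -/
theorem martingale_increment_moment_tendsto_zero (μ : Measure ℝ) [IsFiniteMeasure μ]
    (l : ℝ) (hl : 0 < l) (T : ℝ) (hT : 0 < T) (x : ℝ) (p : ℝ) (hp : 1 ≤ p) :
    Tendsto
      (fun h : ℝ => ∫ s in Set.Ioc (0 : ℝ) T,
        ∫ y, |(Gl l (y - x - h) - Gl l (y - x)) / h - gl l (x - y)| ^ p *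
          ∫ z, heatKernel s (y - z) ∂μ)
      (nhdsWithin 0 {(0 : ℝ)}ᶜ) (nhds 0) :=
  martingale_increment_moment_tendsto_zero_general μ l hl T x p hp
end
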